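/- arXiv:2404.09279 — 3 statements merged into one kernel-verified Lean document; each statement's English description precedes it below -/
import Mathlib

section
/- The following are equivalent: (i) ∑_{k=1}^r [V_k, V_k*] = 0 (the Lindblad generator is unital); (ii) μ(1/2) = 0; (iii) J_12(U) = J_21(U) for every U ∈ SU(2), i.e. the space of generators satisfies Q ⊆ {(0, y) : y ≥ 0}. -/
open Matrix Complex

/-- `Jf V U i j = ∑ₖ |(U* Vₖ U)ᵢⱼ|²`. -/
noncomputable def Jf {r : ℕ} (V : Fin r → Matrix (Fin 2) (Fin 2) ℂ)
    (U : Matrix (Fin 2) (Fin 2) ℂ) (i j : Fin 2) : ℝ :=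
  ∑ k, ‖(Uᴴ * V k * U) i j‖ ^ 2

/-- The space of generators `Q`. -/
noncomputable def Qset {r : ℕ} (V : Fin r → Matrix (Fin 2) (Fin 2) ℂ) : Set (ℝ × ℝ) :=
  {p | ∃ U ∈ Matrix.specialUnitaryGroup (Fin 2) ℂ,
    p = (Jf V U 0 1 - Jf V U 1 0, Jf V U 0 1 + Jf V U 1 0)}

/-- `lam` is stabilizable if some unitary makes the induced derivative vanish. -/
def Stabilizable {r : ℕ} (V : Fin r → Matrix (Fin 2) (Fin 2) ℂ) (lam : ℝ) : Prop :=
  ∃ U ∈ Matrix.specialUnitaryGroup (Fin 2) ℂ,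
    Jf V U 0 1 - lam * (Jf V U 0 1 + Jf V U 1 0) = 0

/-!
Let `L = ∑ₖ [Vₖ, Vₖ*]`. For every unitary `U`, conjugating the commutator gives
`J₂₁(U) - J₁₂(U) = (U* L U)₂₂` (the entry `1 1` in Lean's indexing), and `(U* L U)₂₂` vanishes
for all `U ∈ SU(2)` only when `L = 0` (test it on four Cayley–Klein matrices). Right
multiplication by `!![0, -1; 1, 0]` swaps `J₁₂` and `J₂₁`, so `J₁₂ ≤ J₂₁` on all of `SU(2)`
already forces `J₁₂ = J₂₁`; since `μ(1/2) = max (J₁₂ - J₂₁) / 2`, this is exactly `μ(1/2) = 0`.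
-/

open ComplexConjugate

namespace Matrix

variable {n R : Type*} [Fintype n] [DecidableEq n] [Ring R] [StarRing R]

theorem conjTranspose_mul_commutator_mul {U : Matrix n n R} (hU : U * Uᴴ = 1)
    (B : Matrix n n R) :
    Uᴴ * (B * Bᴴ - Bᴴ * B) * U =
      (Uᴴ * B * U) * (Uᴴ * B * U)ᴴ - (Uᴴ * B * U)ᴴ * (Uᴴ * B * U) := by
  have cancel (X : Matrix n n R) : U * (Uᴴ * X) = X := by
    rw [← Matrix.mul_assoc, hU, Matrix.one_mul]
  simp only [conjTranspose_mul, conjTranspose_conjTranspose, Matrix.mul_sub, Matrix.sub_mul,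
    Matrix.mul_assoc, cancel]

theorem mul_conjTranspose_sub_conjTranspose_mul_apply_one_one
    (A : Matrix (Fin 2) (Fin 2) ℂ) :
    (A * Aᴴ - Aᴴ * A) 1 1 = ((‖A 1 0‖ ^ 2 - ‖A 0 1‖ ^ 2 : ℝ) : ℂ) := by
  simp only [sub_apply, mul_apply, Fin.sum_univ_two, conjTranspose_apply, RCLike.star_def,
    ofReal_sub, ofReal_pow, ← mul_conj']
  ring

end Matrix

def cayleyKlein (a b : ℂ) : Matrix (Fin 2) (Fin 2) ℂ := !![a, -conj b; b, conj a]

theorem cayleyKlein_mem_specialUnitaryGroup {a b : ℂ} (h : normSq a + normSq b = 1) :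
    cayleyKlein a b ∈ specialUnitaryGroup (Fin 2) ℂ := by
  have h' : a * conj a + b * conj b = 1 := by
    simp only [mul_conj, ← ofReal_add, h, ofReal_one]
  refine mem_specialUnitaryGroup_iff.2 ⟨mem_unitaryGroup_iff.2 ?_, ?_⟩
  · ext i j
    fin_cases i <;> fin_cases j <;> simp [cayleyKlein, mul_apply, Fin.sum_univ_two]
    · linear_combination h'
    · ring
    · ring
    · linear_combination h'
  · simp [cayleyKlein, det_fin_two_of]
    linear_combination h'

theorem cayleyKlein_conjTranspose_mul_mul_apply_one_one (a b : ℂ)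
    (N : Matrix (Fin 2) (Fin 2) ℂ) :
    ((cayleyKlein a b)ᴴ * N * cayleyKlein a b) 1 1 =
      b * conj b * N 0 0 - b * conj a * N 0 1 - a * conj b * N 1 0 + a * conj a * N 1 1 := by
  simp [cayleyKlein, mul_apply, Fin.sum_univ_two]
  ring

theorem eq_zero_of_forall_specialUnitary_conj_apply_one_one {N : Matrix (Fin 2) (Fin 2) ℂ}
    (h : ∀ U ∈ specialUnitaryGroup (Fin 2) ℂ, (Uᴴ * N * U) 1 1 = 0) : N = 0 := by
  have vanish (a b : ℂ) (hab : normSq a + normSq b = 1) :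
      b * conj b * N 0 0 - b * conj a * N 0 1 - a * conj b * N 1 0 + a * conj a * N 1 1 = 0 :=
    cayleyKlein_conjTranspose_mul_mul_apply_one_one a b N ▸
      h _ (cayleyKlein_mem_specialUnitaryGroup hab)
  -- `(3/5, 4/5)` is a rational point of the unit circle; the real and the imaginary choice of
  -- `b` isolate `N 0 1 + N 1 0` and `N 0 1 - N 1 0`.
  have h11 := vanish 1 0 (by norm_num)
  have h00 := vanish 0 1 (by norm_num)
  have hsum := vanish (3 / 5) (4 / 5) (by norm_num [normSq_apply])
  have hdiff := vanish (3 / 5) (4 / 5 * I) (by norm_num [normSq_apply])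
  simp only [map_one, map_zero, map_ofNat, map_div₀, map_mul, conj_I, zero_mul, mul_zero,
    one_mul, zero_add, sub_zero, add_zero] at h11 h00 hsum hdiff
  rw [h00, h11] at hsum hdiff
  have h01 : N 0 1 = 0 := by
    linear_combination
      (-25 / 24 : ℂ) * hsum + 25 / 24 * I * hdiff + (N 0 1 - N 1 0) / 2 * I_sq
  have h10 : N 1 0 = 0 := by
    linear_combination
      (-25 / 24 : ℂ) * hsum - 25 / 24 * I * hdiff - (N 0 1 - N 1 0) / 2 * I_sq
  ext i j
  fin_cases i <;> fin_cases j <;> assumption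

section Generators

variable {r : ℕ} (V : Fin r → Matrix (Fin 2) (Fin 2) ℂ)

theorem Jf_nonneg (U : Matrix (Fin 2) (Fin 2) ℂ) (i j : Fin 2) : 0 ≤ Jf V U i j :=
  Finset.sum_nonneg fun _ _ => by positivity

theorem Jf_one_zero_sub_Jf_zero_one {U : Matrix (Fin 2) (Fin 2) ℂ}
    (hU : U ∈ unitaryGroup (Fin 2) ℂ) :
    ((Jf V U 1 0 - Jf V U 0 1 : ℝ) : ℂ) =
      (Uᴴ * (∑ k, (V k * (V k)ᴴ - (V k)ᴴ * V k)) * U) 1 1 := by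
  rw [mem_unitaryGroup_iff, star_eq_conjTranspose] at hU
  simp only [Jf, Finset.mul_sum, Finset.sum_mul, Matrix.sum_apply, ← Finset.sum_sub_distrib,
    ofReal_sum, conjTranspose_mul_commutator_mul hU,
    mul_conjTranspose_sub_conjTranspose_mul_apply_one_one]

theorem sum_commutator_eq_zero_iff :
    (∑ k, (V k * (V k)ᴴ - (V k)ᴴ * V k) = 0) ↔
      ∀ U ∈ specialUnitaryGroup (Fin 2) ℂ, Jf V U 0 1 = Jf V U 1 0 := by
  have hJ {U} (hU : U ∈ specialUnitaryGroup (Fin 2) ℂ) :=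
    Jf_one_zero_sub_Jf_zero_one V (mem_specialUnitaryGroup_iff.1 hU).1
  constructor
  · intro h U hU
    have := hJ hU
    rw [h, Matrix.mul_zero, Matrix.zero_mul, Matrix.zero_apply, ofReal_eq_zero, sub_eq_zero] at this
    exact this.symm
  · intro h
    refine eq_zero_of_forall_specialUnitary_conj_apply_one_one fun U hU => ?_
    rw [← hJ hU, h U hU, sub_self, ofReal_zero]

theorem Jf_mul_cayleyKlein_zero_one (U : Matrix (Fin 2) (Fin 2) ℂ) (i j : Fin 2) :
    Jf V (U * cayleyKlein 0 1) i j = Jf V U i.rev j.rev := by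
  refine Finset.sum_congr rfl fun k _ => ?_
  have hconj : (U * cayleyKlein 0 1)ᴴ * V k * (U * cayleyKlein 0 1) =
      (cayleyKlein 0 1)ᴴ * (Uᴴ * V k * U) * cayleyKlein 0 1 := by
    simp only [conjTranspose_mul, Matrix.mul_assoc]
  rw [hconj]
  generalize Uᴴ * V k * U = A
  fin_cases i <;> fin_cases j <;> simp [cayleyKlein, mul_apply, Fin.sum_univ_two]

theorem forall_Jf_eq_iff_forall_le :
    (∀ U ∈ specialUnitaryGroup (Fin 2) ℂ, Jf V U 0 1 = Jf V U 1 0) ↔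
      ∀ U ∈ specialUnitaryGroup (Fin 2) ℂ, Jf V U 0 1 ≤ Jf V U 1 0 := by
  refine ⟨fun h U hU => (h U hU).le, fun h U hU => (h U hU).antisymm ?_⟩
  have hW := cayleyKlein_mem_specialUnitaryGroup (a := 0) (b := 1) (by norm_num)
  simpa [Jf_mul_cayleyKlein_zero_one] using h _ (mul_mem hU hW)

theorem forall_Jf_eq_iff_Qset_subset :
    (∀ U ∈ specialUnitaryGroup (Fin 2) ℂ, Jf V U 0 1 = Jf V U 1 0) ↔
      Qset V ⊆ {p : ℝ × ℝ | p.1 = 0 ∧ 0 ≤ p.2} := by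
  constructor
  · rintro h _ ⟨U, hU, rfl⟩
    exact ⟨sub_eq_zero.2 (h U hU), add_nonneg (Jf_nonneg V U 0 1) (Jf_nonneg V U 1 0)⟩
  · intro h U hU
    exact sub_eq_zero.1 (h ⟨U, hU, rfl⟩).1

end Generators

theorem stmt_13 {r : ℕ} (V : Fin r → Matrix (Fin 2) (Fin 2) ℂ)
    (μ : ℝ → ℝ)
    (hμ : ∀ lam ∈ Set.Icc (0:ℝ) 1,
      IsGreatest {y : ℝ | ∃ U ∈ Matrix.specialUnitaryGroup (Fin 2) ℂ,
        y = Jf V U 0 1 - lam * (Jf V U 0 1 + Jf V U 1 0)} (μ lam)) :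
    ((∑ k, (V k * (V k)ᴴ - (V k)ᴴ * V k) = 0) ↔ μ (1/2) = 0) ∧
    (μ (1/2) = 0 ↔
      ∀ U ∈ Matrix.specialUnitaryGroup (Fin 2) ℂ, Jf V U 0 1 = Jf V U 1 0) ∧
    ((∀ U ∈ Matrix.specialUnitaryGroup (Fin 2) ℂ, Jf V U 0 1 = Jf V U 1 0) ↔
      Qset V ⊆ {p : ℝ × ℝ | p.1 = 0 ∧ 0 ≤ p.2}) := by
  obtain ⟨⟨U₀, hU₀, hμU₀⟩, hμ_max⟩ := hμ (1 / 2) ⟨by norm_num, by norm_num⟩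
  have hμ_iff : μ (1 / 2) = 0 ↔
      ∀ U ∈ specialUnitaryGroup (Fin 2) ℂ, Jf V U 0 1 = Jf V U 1 0 := by
    refine ⟨fun h => (forall_Jf_eq_iff_forall_le V).2 fun U hU => ?_, fun h => ?_⟩
    · have := hμ_max ⟨U, hU, rfl⟩
      linarith
    · rw [hμU₀, h U₀ hU₀]
      ring
  exact ⟨(sum_commutator_eq_zero_iff V).trans hμ_iff.symm, hμ_iff,
    forall_Jf_eq_iff_Qset_subset V⟩
end

section
/- The following are equivalent: (i) every V_k is normal and the matrices V_1, …, V_r pairwise commute; (ii) (0,0) ∈ Q, i.e. there exists U ∈ SU(2) with J_12(U) = J_21(U) = 0; (iii) ∑_{k=1}^r [V_k, V_k*] = 0 and every λ ∈ [0,1] is stabilizable. -/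
/-!
Conjugation by a unitary `U` is a ⋆-automorphism, so it preserves normality and commutation, and
`J₁₂(U) = J₂₁(U) = 0` says exactly that every `U* Vₖ U` is diagonal. Hence (i) ⇔ (ii) is
simultaneous unitary diagonalization: triangularize one non-scalar `Vₖ` in `SU(2)` (Schur); being
normal it becomes diagonal with distinct eigenvalues, and everything commuting with it is diagonal
too. For (iii) ⇒ (ii), `λ = 0` gives `J₁₂(U) = 0`, while `J₁₂(U) - J₂₁(U)` is the `(0,0)` entry of
`U* (∑ₖ [Vₖ, Vₖ*]) U`, which vanishes.
-/

open Matrix Complex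

open ComplexConjugate

namespace Matrix

theorem isDiag_fin_two_iff {α : Type*} [Zero α] {A : Matrix (Fin 2) (Fin 2) α} :
    A.IsDiag ↔ A 0 1 = 0 ∧ A 1 0 = 0 := by
  refine ⟨fun h => ⟨h (by decide), h (by decide)⟩, fun ⟨h01, h10⟩ i j hij => ?_⟩
  fin_cases i <;> fin_cases j <;> simp_all

section IsDiag

variable {n α : Type*} [Fintype n] [DecidableEq n]

theorem IsDiag.commute [CommSemiring α] {A B : Matrix n n α} (hA : A.IsDiag) (hB : B.IsDiag) :
    Commute A B := by
  rw [← hA.diagonal_diag, ← hB.diagonal_diag]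
  simp only [Commute, SemiconjBy, diagonal_mul_diagonal, mul_comm]

theorem IsDiag.isDiag_of_commute [CommRing α] [NoZeroDivisors α] {W X : Matrix n n α}
    (hW : W.IsDiag) (hinj : Function.Injective W.diag) (h : Commute X W) : X.IsDiag := by
  intro i j hij
  have hXW := congrFun₂ h i j
  rw [← hW.diagonal_diag, mul_diagonal, diagonal_mul] at hXW
  have : X i j * (W.diag j - W.diag i) = 0 := by linear_combination hXW
  exact (mul_eq_zero.mp this).resolve_right (sub_ne_zero.mpr (hinj.ne hij.symm))

end IsDiag

section UnitaryConj

variable {n α : Type*} [Fintype n] [CommRing α] [StarRing α]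

theorem conjTranspose_conj (U A : Matrix n n α) : (Uᴴ * A * U)ᴴ = Uᴴ * Aᴴ * U := by
  simp [Matrix.mul_assoc]

variable [DecidableEq n] {U : Matrix n n α}

theorem conjTranspose_mul_mul_eq_conjStarAlgAut (hU : U ∈ unitaryGroup n α) (A : Matrix n n α) :
    Uᴴ * A * U = Unitary.conjStarAlgAut α (Matrix n n α) (star ⟨U, hU⟩) A := by
  simp [star_eq_conjTranspose]

theorem commute_conj_iff (hU : U ∈ unitaryGroup n α) {A B : Matrix n n α} :
    Commute (Uᴴ * A * U) (Uᴴ * B * U) ↔ Commute A B := by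
  simp only [conjTranspose_mul_mul_eq_conjStarAlgAut hU]
  exact commute_map_iff (EquivLike.injective _)

theorem commute_of_isDiag_conj (hU : U ∈ unitaryGroup n α) {A B : Matrix n n α}
    (hA : (Uᴴ * A * U).IsDiag) (hB : (Uᴴ * B * U).IsDiag) : Commute A B :=
  (commute_conj_iff hU).mp (hA.commute hB)

theorem commute_conjTranspose_of_isDiag_conj (hU : U ∈ unitaryGroup n α) {A : Matrix n n α}
    (hA : (Uᴴ * A * U).IsDiag) : Commute A Aᴴ :=
  commute_of_isDiag_conj hU hA (conjTranspose_conj U A ▸ hA.conjTranspose)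

end UnitaryConj

theorem mul_conjTranspose_sub_conjTranspose_mul_apply_zero_zero (A : Matrix (Fin 2) (Fin 2) ℂ) :
    (A * Aᴴ - Aᴴ * A) 0 0 = ((‖A 0 1‖ ^ 2 - ‖A 1 0‖ ^ 2 : ℝ) : ℂ) := by
  simp only [sub_apply, mul_apply, Fin.sum_univ_two, conjTranspose_apply, RCLike.star_def]
  push_cast
  simp only [← Complex.mul_conj']
  ring

theorem isDiag_of_commute_conjTranspose_of_apply_one_zero {A : Matrix (Fin 2) (Fin 2) ℂ}
    (hA : Commute A Aᴴ) (h10 : A 1 0 = 0) : A.IsDiag := by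
  have h : (A * Aᴴ - Aᴴ * A) 0 0 = 0 := by rw [hA.eq, sub_self, zero_apply]
  rw [mul_conjTranspose_sub_conjTranspose_mul_apply_zero_zero, h10] at h
  exact isDiag_fin_two_iff.mpr ⟨by simpa using h, h10⟩

theorem exists_normSq_add_normSq_eq_one_mulVec_eq_smul (A : Matrix (Fin 2) (Fin 2) ℂ) :
    ∃ (μ : ℂ) (v : Fin 2 → ℂ), normSq (v 0) + normSq (v 1) = 1 ∧ A *ᵥ v = μ • v := by
  obtain ⟨μ, hμ⟩ := Module.End.exists_eigenvalue (toLin' A)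
  obtain ⟨v, hv⟩ := hμ.exists_hasEigenvector
  have hAv : A *ᵥ v = μ • v := by simpa using hv.apply_eq_smul
  set N := normSq (v 0) + normSq (v 1)
  have hN : 0 < N := by
    by_contra! hle
    have h0 : v 0 = 0 := normSq_eq_zero.mp (by linarith [normSq_nonneg (v 0), normSq_nonneg (v 1)])
    have h1 : v 1 = 0 := normSq_eq_zero.mp (by linarith [normSq_nonneg (v 0), normSq_nonneg (v 1)])
    exact hv.2 (funext fun i => by fin_cases i <;> assumption)
  refine ⟨μ, ((Real.sqrt N)⁻¹ : ℂ) • v, ?_, ?_⟩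
  · simp only [Pi.smul_apply, smul_eq_mul, map_mul, map_inv₀, normSq_ofReal]
    rw [← mul_add, Real.mul_self_sqrt hN.le, inv_mul_cancel₀ hN.ne']
  · rw [mulVec_smul, hAv, smul_comm]

theorem mem_specialUnitaryGroup_of_normSq_add_normSq_eq_one {x y : ℂ}
    (h : normSq x + normSq y = 1) :
    !![x, -conj y; y, conj x] ∈ specialUnitaryGroup (Fin 2) ℂ := by
  have h' : conj x * x + conj y * y = 1 := by
    simp only [← normSq_eq_conj_mul_self]; exact_mod_cast h
  rw [mem_specialUnitaryGroup_iff, mem_unitaryGroup_iff', det_fin_two_of]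
  refine ⟨?_, by linear_combination h'⟩
  ext i j
  fin_cases i <;> fin_cases j <;>
    simp [star_eq_conjTranspose, conjTranspose_apply, mul_apply, Fin.sum_univ_two,
      RCLike.star_def] <;>
    first | linear_combination h' | ring

/-- Schur triangularization in `SU(2)`: the first column of `U` is a unit eigenvector of `A`. -/
theorem exists_mem_specialUnitaryGroup_conj_apply_one_zero (A : Matrix (Fin 2) (Fin 2) ℂ) :
    ∃ U ∈ specialUnitaryGroup (Fin 2) ℂ, (Uᴴ * A * U) 1 0 = 0 := by
  obtain ⟨μ, v, hv, hAv⟩ := exists_normSq_add_normSq_eq_one_mulVec_eq_smul A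
  refine ⟨_, mem_specialUnitaryGroup_of_normSq_add_normSq_eq_one hv, ?_⟩
  have h0 := congrFun hAv 0
  have h1 := congrFun hAv 1
  simp only [mulVec, dotProduct, Fin.sum_univ_two, Pi.smul_apply, smul_eq_mul] at h0 h1
  simp [mul_apply, Fin.sum_univ_two, conjTranspose_apply]
  linear_combination (-v 1) * h0 + v 0 * h1

theorem exists_mem_specialUnitaryGroup_forall_isDiag {ι : Type*}
    (V : ι → Matrix (Fin 2) (Fin 2) ℂ) (hn : ∀ k, Commute (V k) (V k)ᴴ)
    (hc : ∀ k l, Commute (V k) (V l)) :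
    ∃ U ∈ specialUnitaryGroup (Fin 2) ℂ, ∀ k, (Uᴴ * V k * U).IsDiag := by
  by_cases hdiag : ∀ k, (V k).IsDiag
  · exact ⟨1, one_mem _, by simpa using hdiag⟩
  push Not at hdiag
  obtain ⟨k₀, hk₀⟩ := hdiag
  obtain ⟨U, hU, h10⟩ := exists_mem_specialUnitaryGroup_conj_apply_one_zero (V k₀)
  have hUu : U ∈ unitaryGroup (Fin 2) ℂ := (mem_specialUnitaryGroup_iff.mp hU).1
  set W := Uᴴ * V k₀ * U with hW
  have hWdiag : W.IsDiag := by
    refine isDiag_of_commute_conjTranspose_of_apply_one_zero ?_ h10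
    rw [hW, conjTranspose_conj, commute_conj_iff hUu]
    exact hn k₀
  -- Equal diagonal entries would make `W`, hence `V k₀`, a scalar matrix.
  have hne : W 0 0 ≠ W 1 1 := by
    intro h
    obtain ⟨h01, h10⟩ := isDiag_fin_two_iff.mp hWdiag
    obtain ⟨c, hc⟩ : ∃ c : ℂ, W = c • 1 := ⟨W 0 0, by
      ext i j
      fin_cases i <;> fin_cases j <;> simp [h, h01, h10]⟩
    rw [hW, conjTranspose_mul_mul_eq_conjStarAlgAut hUu, ← map_one (Unitary.conjStarAlgAut ℂ _ _),
      ← map_smul] at hc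
    exact hk₀ (EquivLike.injective _ hc ▸ isDiag_smul_one _ c)
  have hinj : Function.Injective W.diag := by
    intro i j hij
    fin_cases i <;> fin_cases j <;> simp_all [eq_comm]
  exact ⟨U, hU, fun l => hWdiag.isDiag_of_commute hinj ((commute_conj_iff hUu).mpr (hc l k₀))⟩

end Matrix

section Jf

variable {r : ℕ} (V : Fin r → Matrix (Fin 2) (Fin 2) ℂ) (U : Matrix (Fin 2) (Fin 2) ℂ)

theorem jf_eq_zero_iff (i j : Fin 2) : Jf V U i j = 0 ↔ ∀ k, (Uᴴ * V k * U) i j = 0 := by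
  rw [Jf, Finset.sum_eq_zero_iff_of_nonneg (fun k _ => by positivity)]
  simp

theorem jf_eq_zero_and_jf_eq_zero_iff :
    Jf V U 0 1 = 0 ∧ Jf V U 1 0 = 0 ↔ ∀ k, (Uᴴ * V k * U).IsDiag := by
  simp only [jf_eq_zero_iff, isDiag_fin_two_iff, forall_and]

variable {U}

theorem jf_sub_jf (hU : U ∈ unitaryGroup (Fin 2) ℂ) :
    ((Jf V U 0 1 - Jf V U 1 0 : ℝ) : ℂ) =
      (Uᴴ * (∑ k, (V k * (V k)ᴴ - (V k)ᴴ * V k)) * U) 0 0 := by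
  simp only [← star_eq_conjTranspose (V _), conjTranspose_mul_mul_eq_conjStarAlgAut hU, map_sum,
    map_sub, map_mul, map_star]
  simp only [← conjTranspose_mul_mul_eq_conjStarAlgAut hU, star_eq_conjTranspose,
    ← Finset.sum_sub_distrib, Matrix.sum_apply,
    mul_conjTranspose_sub_conjTranspose_mul_apply_zero_zero, Jf]
  push_cast
  rw [Finset.sum_sub_distrib]

end Jf

theorem stmt_14 {r : ℕ} (V : Fin r → Matrix (Fin 2) (Fin 2) ℂ) :
    (((∀ k, V k * (V k)ᴴ = (V k)ᴴ * V k) ∧ (∀ k l, V k * V l = V l * V k)) ↔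
      (∃ U ∈ Matrix.specialUnitaryGroup (Fin 2) ℂ,
        Jf V U 0 1 = 0 ∧ Jf V U 1 0 = 0)) ∧
    ((∃ U ∈ Matrix.specialUnitaryGroup (Fin 2) ℂ,
        Jf V U 0 1 = 0 ∧ Jf V U 1 0 = 0) ↔
      ((∑ k, (V k * (V k)ᴴ - (V k)ᴴ * V k) = 0) ∧
        ∀ lam ∈ Set.Icc (0:ℝ) 1, Stabilizable V lam)) := by
  have normal_commute_iff :
      ((∀ k, V k * (V k)ᴴ = (V k)ᴴ * V k) ∧ (∀ k l, V k * V l = V l * V k)) ↔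
        ∃ U ∈ specialUnitaryGroup (Fin 2) ℂ, Jf V U 0 1 = 0 ∧ Jf V U 1 0 = 0 := by
    simp only [jf_eq_zero_and_jf_eq_zero_iff]
    refine ⟨fun ⟨hn, hc⟩ => exists_mem_specialUnitaryGroup_forall_isDiag V hn hc, ?_⟩
    rintro ⟨U, hU, hd⟩
    have hUu := (mem_specialUnitaryGroup_iff.mp hU).1
    exact ⟨fun k => commute_conjTranspose_of_isDiag_conj hUu (hd k),
      fun k l => commute_of_isDiag_conj hUu (hd k) (hd l)⟩
  refine ⟨normal_commute_iff, fun hQ => ⟨?_, ?_⟩, fun ⟨hsum, hstab⟩ => ?_⟩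
  · exact Finset.sum_eq_zero fun k _ => sub_eq_zero.mpr ((normal_commute_iff.mpr hQ).1 k)
  · obtain ⟨U, hU, h01, h10⟩ := hQ
    exact fun lam _ => ⟨U, hU, by rw [h01, h10]; ring⟩
  · obtain ⟨U, hU, h0⟩ := hstab 0 ⟨le_rfl, zero_le_one⟩
    have h01 : Jf V U 0 1 = 0 := by simpa using h0
    have hdiff := jf_sub_jf V (mem_specialUnitaryGroup_iff.mp hU).1
    rw [hsum, Matrix.mul_zero, Matrix.zero_mul, Matrix.zero_apply, ofReal_eq_zero] at hdiff
    exact ⟨U, hU, h01, by linarith⟩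
end

section
/- Assume γ₊ > γ₋ (so Δ > 0). Define the interval I = [0, 1/2 − Δ/(4δ)] if δ ≥ Δ/2, I = [1/2 − Δ/(4δ), 1] if δ ≤ −Δ/2, and I = ∅ otherwise; note 1/2 ∉ I. Then for every λ ∈ I, μ(λ) = Δ²/(8δ(1 − 2λ)) + (Σ + δ)(1 − 2λ)/2, and for every λ ∈ [0,1] \ I, μ(λ) = (1/2)(Δ + (1 − 2λ)Σ). -/
/-!
Every `U ∈ SU(2)` has the form `!![a, b; -b̄, ā]` with `‖a‖² + ‖b‖² = 1`, and for such `U` both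
`J₁₂(U)` and `J₂₁(U)` are quadratic polynomials in `‖a‖²` and `‖b‖²`. In the coordinate
`s = ‖a‖² - ‖b‖²`, which ranges exactly over `[-1, 1]`, the objective becomes
`(1 - 2λ)(Σ + δ)/2 + (Δ s - (1 - 2λ) δ s²)/2`. Its maximum over `[-1, 1]` is attained at the vertex
`s = Δ / (2 (1 - 2λ) δ)` when this lies in `[-1, 1]`, i.e. when `Δ ≤ 2 (1 - 2λ) δ`, which is the
condition `λ ∈ I`, and at the endpoint `s = 1` otherwise.
-/

open Matrix Complex

open Set

theorem Matrix.mem_specialUnitaryGroup_fin_two_iff {R : Type*} [CommRing R] [StarRing R]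
    {U : Matrix (Fin 2) (Fin 2) R} :
    U ∈ specialUnitaryGroup (Fin 2) R ↔
      ∃ a b : R, a * star a + b * star b = 1 ∧ U = !![a, b; -star b, star a] := by
  rw [mem_specialUnitaryGroup_iff, mem_unitaryGroup_iff']
  constructor
  · rintro ⟨hUnit, hdet⟩
    have hadj : star U = U.adjugate := by
      rw [← mul_one (star U), ← one_smul R (1 : Matrix _ _ R), ← hdet, ← mul_adjugate,
        ← mul_assoc, hUnit, one_mul]
    rw [adjugate_fin_two, ← Matrix.ext_iff] at hadj
    have h11 : U 1 1 = star (U 0 0) := by simpa using (hadj 0 0).symm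
    have h10 : U 1 0 = -star (U 0 1) := by simpa using congrArg star (hadj 0 1)
    rw [det_fin_two, h11, h10] at hdet
    refine ⟨U 0 0, U 0 1, by linear_combination hdet, ?_⟩
    rw [← h11, ← h10]
    exact eta_fin_two U
  · rintro ⟨a, b, hab, rfl⟩
    constructor
    · ext i j
      fin_cases i <;> fin_cases j <;> simp [mul_apply, Fin.sum_univ_two]
      all_goals first | ring1 | linear_combination hab
    · rw [det_fin_two_of]
      linear_combination hab

theorem Complex.mul_star_add_mul_star_eq_one_iff {a b : ℂ} :
    a * star a + b * star b = 1 ↔ ‖a‖ ^ 2 + ‖b‖ ^ 2 = 1 := by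
  simp only [Complex.star_def, Complex.mul_conj', ← Complex.ofReal_pow, ← Complex.ofReal_add,
    ← Complex.ofReal_one, Complex.ofReal_inj]

theorem Complex.exists_norm_sq_add_eq_one_and_sub_eq {s : ℝ} (hs : s ∈ Icc (-1) 1) :
    ∃ a b : ℂ, ‖a‖ ^ 2 + ‖b‖ ^ 2 = 1 ∧ ‖a‖ ^ 2 - ‖b‖ ^ 2 = s := by
  have hpos : ‖((√((1 + s) / 2) : ℝ) : ℂ)‖ ^ 2 = (1 + s) / 2 := by
    rw [Complex.norm_real, Real.norm_eq_abs, sq_abs, Real.sq_sqrt (by linarith [hs.1])]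
  have hneg : ‖((√((1 - s) / 2) : ℝ) : ℂ)‖ ^ 2 = (1 - s) / 2 := by
    rw [Complex.norm_real, Real.norm_eq_abs, sq_abs, Real.sq_sqrt (by linarith [hs.2])]
  exact ⟨(√((1 + s) / 2) : ℝ), (√((1 - s) / 2) : ℝ), by rw [hpos, hneg]; ring,
    by rw [hpos, hneg]; ring⟩

lemma half_smul_pauliX_add_I_smul_pauliY :
    (1 / 2 : ℂ) • (!![0, 1; 1, 0] + Complex.I • !![0, -Complex.I; Complex.I, 0]) =
      (!![0, 1; 0, 0] : Matrix (Fin 2) (Fin 2) ℂ) := by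
  ext i j; fin_cases i <;> fin_cases j <;> norm_num

lemma half_smul_pauliX_sub_I_smul_pauliY :
    (1 / 2 : ℂ) • (!![0, 1; 1, 0] - Complex.I • !![0, -Complex.I; Complex.I, 0]) =
      (!![0, 0; 1, 0] : Matrix (Fin 2) (Fin 2) ℂ) := by
  ext i j; fin_cases i <;> fin_cases j <;> norm_num

lemma norm_conjTranspose_mul_sqrt_smul_mul_apply_sq {n : Type*} [Fintype n] {γ : ℝ}
    (hγ : 0 ≤ γ) (U P : Matrix n n ℂ) (i j : n) :
    ‖(Uᴴ * ((√γ : ℂ) • P) * U) i j‖ ^ 2 = γ * ‖(Uᴴ * P * U) i j‖ ^ 2 := by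
  rw [Matrix.mul_smul, Matrix.smul_mul, Matrix.smul_apply, smul_eq_mul, norm_mul, mul_pow,
    Complex.norm_real, Real.norm_of_nonneg (Real.sqrt_nonneg _), Real.sq_sqrt hγ]

lemma Jf_cayleyKlein {γp γm γz : ℝ} (hp : 0 ≤ γp) (hm : 0 ≤ γm) (hz : 0 ≤ γz)
    {V : Fin 3 → Matrix (Fin 2) (Fin 2) ℂ}
    (hV0 : V 0 = (√γp : ℂ) • !![0, 1; 0, 0]) (hV1 : V 1 = (√γm : ℂ) • !![0, 0; 1, 0])
    (hV2 : V 2 = (√γz : ℂ) • !![1, 0; 0, -1]) (a b : ℂ) :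
    Jf V !![a, b; -star b, star a] 0 1 =
        γp * (‖a‖ ^ 2) ^ 2 + γm * (‖b‖ ^ 2) ^ 2 + 4 * γz * ‖a‖ ^ 2 * ‖b‖ ^ 2 ∧
      Jf V !![a, b; -star b, star a] 1 0 =
        γp * (‖b‖ ^ 2) ^ 2 + γm * (‖a‖ ^ 2) ^ 2 + 4 * γz * ‖a‖ ^ 2 * ‖b‖ ^ 2 := by
  simp only [Jf, Fin.sum_univ_three, hV0, hV1, hV2,
    norm_conjTranspose_mul_sqrt_smul_mul_apply_sq hp,
    norm_conjTranspose_mul_sqrt_smul_mul_apply_sq hm,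
    norm_conjTranspose_mul_sqrt_smul_mul_apply_sq hz]
  simp [mul_apply, Fin.sum_univ_two]
  constructor <;> ring_nf <;> simp only [norm_mul, RCLike.norm_conj, RCLike.norm_ofNat] <;> ring

lemma isGreatest_quadratic_image_Icc_of_abs_le {b c : ℝ} (hc : 0 < c) (h : |b| ≤ 2 * c) :
    IsGreatest ((fun s => b * s - c * s ^ 2) '' Icc (-1) 1) (b ^ 2 / (4 * c)) := by
  refine ⟨⟨b / (2 * c), ?_, by field_simp; ring⟩, ?_⟩
  · rw [mem_Icc, le_div_iff₀ (by positivity), div_le_iff₀ (by positivity)]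
    constructor <;> linarith [abs_le.mp h]
  · rintro _ ⟨s, -, rfl⟩
    have : b ^ 2 / (4 * c) - (b * s - c * s ^ 2) = (2 * c * s - b) ^ 2 / (4 * c) := by
      field_simp; ring
    linarith [div_nonneg (sq_nonneg (2 * c * s - b)) (by positivity : (0 : ℝ) ≤ 4 * c)]

lemma isGreatest_quadratic_image_Icc_of_le {b c : ℝ} (hb : 0 ≤ b) (h : 2 * c ≤ b) :
    IsGreatest ((fun s => b * s - c * s ^ 2) '' Icc (-1) 1) (b - c) := by
  refine ⟨⟨1, by norm_num, by ring⟩, ?_⟩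
  rintro _ ⟨s, ⟨hs₀, hs₁⟩, rfl⟩
  have : 0 ≤ b - c * (1 + s) := by
    rcases le_total c 0 with hc | hc <;> nlinarith
  nlinarith

/-- The objective `J₁₂ - λ (J₁₂ + J₂₁)` as a function of `s = ‖U₀₀‖² - ‖U₀₁‖²`. -/
noncomputable def reducedObjective (Δ Sig δ lam s : ℝ) : ℝ :=
  (1 - 2 * lam) * (Sig + δ) / 2 + (Δ * s - (1 - 2 * lam) * δ * s ^ 2) / 2

lemma reducedObjective_image_eq (Δ Sig δ lam : ℝ) :
    reducedObjective Δ Sig δ lam '' Icc (-1) 1 =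
      (fun x => (1 - 2 * lam) * (Sig + δ) / 2 + x / 2) ''
        ((fun s => Δ * s - (1 - 2 * lam) * δ * s ^ 2) '' Icc (-1) 1) := by
  rw [image_image]
  rfl

lemma isGreatest_reducedObjective_of_le {Δ Sig δ lam : ℝ} (hΔ : 0 < Δ)
    (h : Δ ≤ 2 * (1 - 2 * lam) * δ) :
    IsGreatest (reducedObjective Δ Sig δ lam '' Icc (-1) 1)
      (Δ ^ 2 / (8 * δ * (1 - 2 * lam)) + (Sig + δ) * (1 - 2 * lam) / 2) := by
  have hquad := isGreatest_quadratic_image_Icc_of_abs_le (b := Δ) (c := (1 - 2 * lam) * δ)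
    (by linarith) (by rw [abs_of_pos hΔ]; linarith)
  rw [reducedObjective_image_eq,
    show Δ ^ 2 / (8 * δ * (1 - 2 * lam)) + (Sig + δ) * (1 - 2 * lam) / 2
      = (1 - 2 * lam) * (Sig + δ) / 2 + Δ ^ 2 / (4 * ((1 - 2 * lam) * δ)) / 2 by
    rw [div_div]; ring]
  exact ((monotone_id.div_const zero_le_two).const_add _).map_isGreatest hquad

lemma isGreatest_reducedObjective_of_ge {Δ Sig δ lam : ℝ} (hΔ : 0 ≤ Δ)
    (h : 2 * (1 - 2 * lam) * δ ≤ Δ) :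
    IsGreatest (reducedObjective Δ Sig δ lam '' Icc (-1) 1)
      ((1 / 2) * (Δ + (1 - 2 * lam) * Sig)) := by
  have hquad := isGreatest_quadratic_image_Icc_of_le (c := (1 - 2 * lam) * δ) hΔ (by linarith)
  rw [reducedObjective_image_eq, show (1 / 2) * (Δ + (1 - 2 * lam) * Sig)
    = (1 - 2 * lam) * (Sig + δ) / 2 + (Δ - (1 - 2 * lam) * δ) / 2 by ring]
  exact ((monotone_id.div_const zero_le_two).const_add _).map_isGreatest hquad

lemma setOf_eq_image_reducedObjective {γp γm γz : ℝ} (hp : 0 ≤ γp) (hm : 0 ≤ γm) (hz : 0 ≤ γz)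
    {V : Fin 3 → Matrix (Fin 2) (Fin 2) ℂ}
    (hV0 : V 0 = (√γp : ℂ) • !![0, 1; 0, 0]) (hV1 : V 1 = (√γm : ℂ) • !![0, 0; 1, 0])
    (hV2 : V 2 = (√γz : ℂ) • !![1, 0; 0, -1]) (lam : ℝ) :
    {y : ℝ | ∃ U ∈ specialUnitaryGroup (Fin 2) ℂ,
        y = Jf V U 0 1 - lam * (Jf V U 0 1 + Jf V U 1 0)} =
      reducedObjective (γp - γm) (γp + γm) (2 * γz - (γp + γm) / 2) lam '' Icc (-1) 1 := by
  have objective_eq : ∀ a b : ℂ, ‖a‖ ^ 2 + ‖b‖ ^ 2 = 1 →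
      Jf V !![a, b; -star b, star a] 0 1 - lam * (Jf V !![a, b; -star b, star a] 0 1
        + Jf V !![a, b; -star b, star a] 1 0) =
      reducedObjective (γp - γm) (γp + γm) (2 * γz - (γp + γm) / 2) lam (‖a‖ ^ 2 - ‖b‖ ^ 2) := by
    intro a b hab
    obtain ⟨h01, h10⟩ := Jf_cayleyKlein hp hm hz hV0 hV1 hV2 a b
    rw [h01, h10, reducedObjective, show ‖b‖ ^ 2 = 1 - ‖a‖ ^ 2 by linarith]
    ring
  ext y
  constructor
  · rintro ⟨U, hU, rfl⟩
    obtain ⟨a, b, hab, rfl⟩ := mem_specialUnitaryGroup_fin_two_iff.mp hU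
    rw [Complex.mul_star_add_mul_star_eq_one_iff] at hab
    refine ⟨‖a‖ ^ 2 - ‖b‖ ^ 2, ?_, (objective_eq a b hab).symm⟩
    constructor <;> linarith [sq_nonneg ‖a‖, sq_nonneg ‖b‖]
  · rintro ⟨s, hs, rfl⟩
    obtain ⟨a, b, hab, rfl⟩ := Complex.exists_norm_sq_add_eq_one_and_sub_eq hs
    exact ⟨_, mem_specialUnitaryGroup_fin_two_iff.mpr
      ⟨a, b, Complex.mul_star_add_mul_star_eq_one_iff.mpr hab, rfl⟩, (objective_eq a b hab).symm⟩

lemma le_half_sub_div_iff_of_pos {Δ δ lam : ℝ} (hδ : 0 < δ) :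
    lam ≤ 1 / 2 - Δ / (4 * δ) ↔ Δ ≤ 2 * (1 - 2 * lam) * δ := by
  rw [le_sub_comm, div_le_iff₀ (by positivity)]
  constructor <;> intro h <;> linarith

lemma half_sub_div_le_iff_of_neg {Δ δ lam : ℝ} (hδ : δ < 0) :
    1 / 2 - Δ / (4 * δ) ≤ lam ↔ Δ ≤ 2 * (1 - 2 * lam) * δ := by
  rw [sub_le_comm, le_div_iff_of_neg (by linarith)]
  constructor <;> intro h <;> linarith

theorem stmt_18
    (γp γm γz : ℝ) (hpm : γm < γp) (hm : 0 ≤ γm) (hz : 0 ≤ γz)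
    (Δ Sig δ : ℝ) (hΔ : Δ = γp - γm) (hSig : Sig = γp + γm) (hδ : δ = 2 * γz - Sig / 2)
    (V : Fin 3 → Matrix (Fin 2) (Fin 2) ℂ)
    (hV0 : V 0 = (Real.sqrt γp : ℂ) • ((1/2 : ℂ) •
      ((!![0, 1; 1, 0] : Matrix (Fin 2) (Fin 2) ℂ)
        + Complex.I • (!![0, -Complex.I; Complex.I, 0] : Matrix (Fin 2) (Fin 2) ℂ))))
    (hV1 : V 1 = (Real.sqrt γm : ℂ) • ((1/2 : ℂ) •
      ((!![0, 1; 1, 0] : Matrix (Fin 2) (Fin 2) ℂ)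
        - Complex.I • (!![0, -Complex.I; Complex.I, 0] : Matrix (Fin 2) (Fin 2) ℂ))))
    (hV2 : V 2 = (Real.sqrt γz : ℂ) • (!![1, 0; 0, -1] : Matrix (Fin 2) (Fin 2) ℂ))
    (μ : ℝ → ℝ)
    (hμ : ∀ lam ∈ Set.Icc (0:ℝ) 1,
      IsGreatest {y : ℝ | ∃ U ∈ Matrix.specialUnitaryGroup (Fin 2) ℂ,
        y = Jf V U 0 1 - lam * (Jf V U 0 1 + Jf V U 1 0)} (μ lam)) :
    (Δ / 2 ≤ δ →
      (∀ lam ∈ Set.Icc (0:ℝ) (1/2 - Δ / (4 * δ)),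
        μ lam = Δ ^ 2 / (8 * δ * (1 - 2 * lam)) + (Sig + δ) * (1 - 2 * lam) / 2) ∧
      (∀ lam ∈ Set.Icc (0:ℝ) 1, lam ∉ Set.Icc (0:ℝ) (1/2 - Δ / (4 * δ)) →
        μ lam = (1/2) * (Δ + (1 - 2 * lam) * Sig)) ∧
      (1/2 : ℝ) ∉ Set.Icc (0:ℝ) (1/2 - Δ / (4 * δ))) ∧
    (δ ≤ -(Δ / 2) →
      (∀ lam ∈ Set.Icc (1/2 - Δ / (4 * δ)) (1:ℝ),
        μ lam = Δ ^ 2 / (8 * δ * (1 - 2 * lam)) + (Sig + δ) * (1 - 2 * lam) / 2) ∧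
      (∀ lam ∈ Set.Icc (0:ℝ) 1, lam ∉ Set.Icc (1/2 - Δ / (4 * δ)) (1:ℝ) →
        μ lam = (1/2) * (Δ + (1 - 2 * lam) * Sig)) ∧
      (1/2 : ℝ) ∉ Set.Icc (1/2 - Δ / (4 * δ)) (1:ℝ)) ∧
    (-(Δ / 2) < δ → δ < Δ / 2 →
      ∀ lam ∈ Set.Icc (0:ℝ) 1, μ lam = (1/2) * (Δ + (1 - 2 * lam) * Sig)) := by
  rw [half_smul_pauliX_add_I_smul_pauliY] at hV0
  rw [half_smul_pauliX_sub_I_smul_pauliY] at hV1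
  have hΔpos : 0 < Δ := hΔ ▸ sub_pos.mpr hpm
  have hμ_reduced : ∀ lam ∈ Icc (0 : ℝ) 1,
      IsGreatest (reducedObjective Δ Sig δ lam '' Icc (-1) 1) (μ lam) := by
    intro lam hlam
    rw [hδ, hΔ, hSig, ← setOf_eq_image_reducedObjective (hm.trans hpm.le) hm hz hV0 hV1 hV2]
    exact hμ lam hlam
  have μ_of_le : ∀ lam ∈ Icc (0 : ℝ) 1, Δ ≤ 2 * (1 - 2 * lam) * δ →
      μ lam = Δ ^ 2 / (8 * δ * (1 - 2 * lam)) + (Sig + δ) * (1 - 2 * lam) / 2 :=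
    fun lam hlam h ↦ (hμ_reduced lam hlam).unique (isGreatest_reducedObjective_of_le hΔpos h)
  have μ_of_ge : ∀ lam ∈ Icc (0 : ℝ) 1, 2 * (1 - 2 * lam) * δ ≤ Δ →
      μ lam = (1 / 2) * (Δ + (1 - 2 * lam) * Sig) :=
    fun lam hlam h ↦ (hμ_reduced lam hlam).unique (isGreatest_reducedObjective_of_ge hΔpos.le h)
  refine ⟨fun hδ_ge ↦ ?_, fun hδ_le ↦ ?_, fun hδ_gt hδ_lt lam hlam ↦ μ_of_ge lam hlam ?_⟩
  · have hiff := fun lam ↦ le_half_sub_div_iff_of_pos (Δ := Δ) (lam := lam) (by linarith)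
    refine ⟨fun lam ⟨h₀, h₁⟩ ↦ ?_, fun lam hlam hnot ↦ μ_of_ge lam hlam ?_, fun ⟨_, h⟩ ↦ ?_⟩
    · have h := (hiff lam).mp h₁
      exact μ_of_le lam ⟨h₀, by nlinarith⟩ h
    · exact (not_le.mp fun h ↦ hnot ⟨hlam.1, (hiff lam).mpr h⟩).le
    · linarith [(hiff _).mp h]
  · have hiff := fun lam ↦ half_sub_div_le_iff_of_neg (Δ := Δ) (lam := lam) (by linarith)
    refine ⟨fun lam ⟨h₀, h₁⟩ ↦ ?_, fun lam hlam hnot ↦ μ_of_ge lam hlam ?_, fun ⟨h, _⟩ ↦ ?_⟩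
    · have h := (hiff lam).mp h₀
      exact μ_of_le lam ⟨by nlinarith, h₁⟩ h
    · exact (not_le.mp fun h ↦ hnot ⟨(hiff lam).mpr h, hlam.2⟩).le
    · linarith [(hiff _).mp h]
  · rcases le_total 0 δ with h | h <;> nlinarith [hlam.1, hlam.2]
end
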